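/- The function g is strictly decreasing on the interval (0, 20/21). -/

import Mathlib

/-- The lower-bound function `g` of Theorem II.1 (base-2 logarithms; since
`Real.logb 2 0 = 0`, terms of the form `0 · log₂ 0` vanish as intended). -/
noncomputable def g (r : ℝ) : ℝ :=
  (1/64) * (2*(1-r) * Real.logb 2 (1280*(1-r)/(43*r+20))
    + (63*r/10) * Real.logb 2 (64*r/(43*r+20))
    + 18*(1-r) * Real.logb 2 (640*(1-r)/(11*r+20))
    + (279*r/10) * Real.logb 2 (32*r/(11*r+20))
    + 6*(1-r) * Real.logb 2 (1280*(1-r)/(r+60))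
    + (61*r/10) * Real.logb 2 (64*r/(r+60))
    + 20*(1-r) * Real.logb 2 (64*(1-r)/(4-r))
    + 15*r * Real.logb 2 (16*r/(5*(4-r)))
    + 18*(1-r) * Real.logb 2 (640*(1-r)/(60-31*r))
    + (87*r/10) * Real.logb 2 (32*r/(60-31*r)))

open Real Set

/-! Each of the five pairs of terms of `g` is an `entropyBlock`
`p (1 - t) log (A (1 - t) / L t) + q t log (B t / L t)` with `L t = a t + b` proportional to
`p (1 - t) + q t`. This proportionality makes the derivative of the block the plain
`-p log (A (1 - t) / L t) + q log (B t / L t)`, whose own derivative `q b / (t (1 - t) L t)` is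
positive. All ten logarithms vanish at `t = 20/21`, so every block has negative slope, hence is
strictly decreasing, on `(0, 20/21)`. -/

noncomputable def entropyBlock (p q A B a b t : ℝ) : ℝ :=
  p * (1 - t) * log (A * (1 - t) / (a * t + b)) + q * t * log (B * t / (a * t + b))

noncomputable def entropyBlockSlope (p q A B a b t : ℝ) : ℝ :=
  -p * log (A * (1 - t) / (a * t + b)) + q * log (B * t / (a * t + b))

section
variable {p q A B a b t : ℝ}

theorem affine_pos_of_mul_eq (hp : 0 < p) (hq : 0 < q) (hb : 0 < b)
    (hab : p * a = (q - p) * b) (ht₀ : 0 ≤ t) (ht₁ : t < 1) : 0 < a * t + b := by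
  have hpL : p * (a * t + b) = b * (p * (1 - t) + q * t) := by linear_combination t * hab
  have : 0 < p * (a * t + b) := by
    rw [hpL]
    exact mul_pos hb (add_pos_of_pos_of_nonneg (mul_pos hp (sub_pos.2 ht₁)) (mul_nonneg hq.le ht₀))
  exact pos_of_mul_pos_right this hp.le

theorem hasDerivAt_log_div_affine {u : ℝ → ℝ} {u' : ℝ} (hu : HasDerivAt u u' t) (hu₀ : u t ≠ 0)
    (hL : a * t + b ≠ 0) :
    HasDerivAt (fun x => log (u x / (a * x + b))) (u' / u t - a / (a * t + b)) t := by
  have hL' : HasDerivAt (fun x => a * x + b) a t := by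
    simpa using ((hasDerivAt_id t).const_mul a).add_const b
  refine ((hu.div hL' hL).log (div_ne_zero hu₀ hL)).congr_deriv ?_
  simp only [Pi.div_apply]
  field_simp

theorem hasDerivAt_const_mul_one_sub (c t : ℝ) : HasDerivAt (fun x => c * (1 - x)) (-c) t := by
  simpa using ((hasDerivAt_id t).const_sub 1).const_mul c

theorem hasDerivAt_entropyBlock (hab : p * a = (q - p) * b) (hA : A ≠ 0) (hB : B ≠ 0)
    (ht₀ : t ≠ 0) (ht₁ : t ≠ 1) (hL : a * t + b ≠ 0) :
    HasDerivAt (entropyBlock p q A B a b) (entropyBlockSlope p q A B a b t) t := by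
  have hs : 1 - t ≠ 0 := sub_ne_zero.2 (Ne.symm ht₁)
  have l₁ := hasDerivAt_log_div_affine (hasDerivAt_const_mul_one_sub A t) (mul_ne_zero hA hs) hL
  have l₂ := hasDerivAt_log_div_affine ((hasDerivAt_id t).const_mul B) (mul_ne_zero hB ht₀) hL
  refine (((hasDerivAt_const_mul_one_sub p t).mul l₁).add
    (((hasDerivAt_id t).const_mul q).mul l₂)).congr_deriv ?_
  simp only [entropyBlockSlope, id]
  have : t * a + b ≠ 0 := by rwa [mul_comm]
  field_simp
  linear_combination (-1 : ℝ) * hab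

theorem hasDerivAt_entropyBlockSlope (hab : p * a = (q - p) * b) (hA : A ≠ 0) (hB : B ≠ 0)
    (ht₀ : t ≠ 0) (ht₁ : t ≠ 1) (hL : a * t + b ≠ 0) :
    HasDerivAt (entropyBlockSlope p q A B a b) (q * b / (t * (1 - t) * (a * t + b))) t := by
  have hs : 1 - t ≠ 0 := sub_ne_zero.2 (Ne.symm ht₁)
  have l₁ := hasDerivAt_log_div_affine (hasDerivAt_const_mul_one_sub A t) (mul_ne_zero hA hs) hL
  have l₂ := hasDerivAt_log_div_affine ((hasDerivAt_id t).const_mul B) (mul_ne_zero hB ht₀) hL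
  refine ((l₁.const_mul (-p)).add (l₂.const_mul q)).congr_deriv ?_
  simp only [id]
  have : t * a + b ≠ 0 := by rwa [mul_comm]
  field_simp
  linear_combination t * hab

theorem entropyBlockSlope_neg {r₀ : ℝ} (hp : 0 < p) (hq : 0 < q) (hb : 0 < b)
    (hab : p * a = (q - p) * b) (hA : A * (1 - r₀) = a * r₀ + b) (hB : B * r₀ = a * r₀ + b)
    (hr₀ : r₀ < 1) (ht : t ∈ Ioo 0 r₀) : entropyBlockSlope p q A B a b t < 0 := by
  have hL : ∀ x ∈ Ioc 0 r₀, 0 < a * x + b := fun x hx =>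
    affine_pos_of_mul_eq hp hq hb hab hx.1.le (hx.2.trans_lt hr₀)
  have hr₀L := hL r₀ ⟨ht.1.trans ht.2, le_rfl⟩
  have hA₀ : A ≠ 0 := left_ne_zero_of_mul (hA ▸ hr₀L.ne')
  have hB₀ : B ≠ 0 := left_ne_zero_of_mul (hB ▸ hr₀L.ne')
  have hderiv : ∀ x ∈ Ioc 0 r₀, HasDerivAt (entropyBlockSlope p q A B a b)
      (q * b / (x * (1 - x) * (a * x + b))) x := fun x hx =>
    hasDerivAt_entropyBlockSlope hab hA₀ hB₀ hx.1.ne' (hx.2.trans_lt hr₀).ne (hL x hx).ne'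
  have hmono : StrictMonoOn (entropyBlockSlope p q A B a b) (Ioc 0 r₀) := by
    refine strictMonoOn_of_deriv_pos (convex_Ioc 0 r₀)
      (fun x hx => (hderiv x hx).continuousAt.continuousWithinAt) fun x hx => ?_
    rw [interior_Ioc] at hx
    rw [(hderiv x (Ioo_subset_Ioc_self hx)).deriv]
    exact div_pos (mul_pos hq hb) (mul_pos (mul_pos hx.1 (by linarith [hx.2]))
      (hL x (Ioo_subset_Ioc_self hx)))
  have hzero : entropyBlockSlope p q A B a b r₀ = 0 := by
    simp [entropyBlockSlope, hA, hB, div_self hr₀L.ne']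
  calc entropyBlockSlope p q A B a b t
      < entropyBlockSlope p q A B a b r₀ := hmono ⟨ht.1, ht.2.le⟩ ⟨ht.1.trans ht.2, le_rfl⟩ ht.2
    _ = 0 := hzero

theorem strictAntiOn_entropyBlock {r₀ : ℝ} (hp : 0 < p) (hq : 0 < q) (hb : 0 < b)
    (hab : p * a = (q - p) * b) (hA : A * (1 - r₀) = a * r₀ + b) (hB : B * r₀ = a * r₀ + b)
    (hr₀ : r₀ < 1) : StrictAntiOn (entropyBlock p q A B a b) (Ioo 0 r₀) := by
  have hderiv : ∀ x ∈ Ioo 0 r₀, HasDerivAt (entropyBlock p q A B a b)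
      (entropyBlockSlope p q A B a b x) x := by
    intro x hx
    have hL := affine_pos_of_mul_eq hp hq hb hab hx.1.le (hx.2.trans hr₀)
    have hr₀L := affine_pos_of_mul_eq hp hq hb hab (hx.1.trans hx.2).le hr₀
    have hA₀ : A ≠ 0 := left_ne_zero_of_mul (hA ▸ hr₀L.ne')
    have hB₀ : B ≠ 0 := left_ne_zero_of_mul (hB ▸ hr₀L.ne')
    exact hasDerivAt_entropyBlock hab hA₀ hB₀ hx.1.ne' (hx.2.trans hr₀).ne hL.ne'
  refine strictAntiOn_of_deriv_neg (convex_Ioo 0 r₀)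
    (fun x hx => (hderiv x hx).continuousAt.continuousWithinAt) fun x hx => ?_
  rw [interior_Ioo] at hx
  rw [(hderiv x hx).deriv]
  exact entropyBlockSlope_neg hp hq hb hab hA hB hr₀ hx

end

theorem g_eq_entropyBlock_sum : g = fun r => (64 * log 2)⁻¹ *
    (entropyBlock 2 (63/10) 1280 64 43 20 r + entropyBlock 18 (279/10) 640 32 11 20 r
      + entropyBlock 6 (61/10) 1280 64 1 60 r + entropyBlock 20 15 64 (16/5) (-1) 4 r
      + entropyBlock 18 (87/10) 640 32 (-31) 60 r) := by
  funext r
  rw [g, show 16 * r / (5 * (4 - r)) = 16 / 5 * r / (4 - r) by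
    rw [div_mul_eq_div_div, mul_div_right_comm]]
  simp only [entropyBlock, logb]
  ring_nf

/-- `g` is strictly decreasing on `(0, 20/21)`. -/
theorem g_strictAntiOn : StrictAntiOn g (Set.Ioo (0 : ℝ) (20 / 21)) := by
  rw [g_eq_entropyBlock_sum]
  refine (strictMono_mul_left_of_pos (by positivity : 0 < (64 * log 2)⁻¹)).comp_strictAntiOn ?_
  iterate 4 apply StrictAntiOn.add
  all_goals apply strictAntiOn_entropyBlock <;> norm_num
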